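/- arXiv:1909.09514 — 2 statements merged into one kernel-verified Lean document; each statement's English description precedes it below -/
import Mathlib

section
/- Let I be a closed ideal of a Banach lattice E. If I and the quotient Banach lattice E/I both have the dual positive Schur property, then E has the dual positive Schur property. -/
open Filter Topology

set_option synthInstance.maxHeartbeats 1000000
set_option maxHeartbeats 1000000

/-- A Banach lattice `E` has the *dual positive Schur property* if every weak*-null
sequence of positive functionals in `E*` is norm null. -/
def HasDualPositiveSchurProperty (E : Type*) [NormedAddCommGroup E] [Lattice E] [HasSolidNorm E]
    [IsOrderedAddMonoid E]
    [NormedSpace ℝ E] : Prop :=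
  ∀ φ : ℕ → E →L[ℝ] ℝ,
    (∀ n, ∀ x : E, 0 ≤ x → 0 ≤ φ n x) →
    (∀ x : E, Tendsto (fun n => φ n x) atTop (𝓝 0)) →
    Tendsto (fun n => ‖φ n‖) atTop (𝓝 0)

/-- The closed ideal `I`, as a Banach lattice in its own right, has the dual positive
Schur property. -/
def IdealHasDualPositiveSchurProperty {E : Type*} [NormedAddCommGroup E] [Lattice E] [HasSolidNorm E]
    [IsOrderedAddMonoid E]
    [NormedSpace ℝ E] (I : Submodule ℝ E) : Prop :=
  ∀ φ : ℕ → I →L[ℝ] ℝ,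
    (∀ n, ∀ v : I, (0 : E) ≤ (v : E) → 0 ≤ φ n v) →
    (∀ v : I, Tendsto (fun n => φ n v) atTop (𝓝 0)) →
    Tendsto (fun n => ‖φ n‖) atTop (𝓝 0)

/-- The quotient Banach lattice `E/I` has the dual positive Schur property; an element of
the quotient is positive iff it has a positive representative, and a functional on the
quotient is positive iff it is nonnegative on positive elements. -/
def QuotientHasDualPositiveSchurProperty {E : Type*} [NormedAddCommGroup E] [Lattice E] [HasSolidNorm E]
    [IsOrderedAddMonoid E]
    [NormedSpace ℝ E] (I : Submodule ℝ E) : Prop :=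
  ∀ φ : ℕ → (E ⧸ I) →L[ℝ] ℝ,
    (∀ n, ∀ u : E ⧸ I, (∃ v : E, 0 ≤ v ∧ Submodule.Quotient.mk v = u) → 0 ≤ φ n u) →
    (∀ u : E ⧸ I, Tendsto (fun n => φ n u) atTop (𝓝 0)) →
    Tendsto (fun n => ‖φ n‖) atTop (𝓝 0)

section Helpers

variable {E : Type*} [NormedAddCommGroup E] [Lattice E] [HasSolidNorm E] [IsOrderedAddMonoid E]
  [NormedSpace ℝ E]
variable (I : Submodule ℝ E) (φ : E →L[ℝ] ℝ)

/-- The set of values `φ y` for `y ∈ I` with `0 ≤ y ≤ x`. -/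
def pSet (x : E) : Set ℝ := (fun y => φ y) '' {y | y ∈ I ∧ 0 ≤ y ∧ y ≤ x}

/-- `pfun x = sup { φ y : y ∈ I, 0 ≤ y ≤ x }`. -/
noncomputable def pfun (x : E) : ℝ := sSup (pSet I φ x)

variable {I φ}

lemma phi_mono (hφ : ∀ x : E, 0 ≤ x → 0 ≤ φ x) {a b : E} (h : a ≤ b) : φ a ≤ φ b := by
  have h0 := hφ (b - a) (sub_nonneg.mpr h)
  have : φ (b - a) = φ b - φ a := map_sub φ b a
  linarith [this ▸ h0]

lemma pSet_nonempty {x : E} (hx : 0 ≤ x) : (pSet I φ x).Nonempty :=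
  ⟨φ 0, 0, ⟨I.zero_mem, le_rfl, hx⟩, rfl⟩

lemma norm_le_of_nonneg_le {y x : E} (hy : 0 ≤ y) (hyx : y ≤ x) : ‖y‖ ≤ ‖x‖ := by
  refine HasSolidNorm.solid ?_
  rw [abs_of_nonneg hy, abs_of_nonneg (hy.trans hyx)]
  exact hyx

lemma pSet_bddAbove {x : E} (hx : 0 ≤ x) : BddAbove (pSet I φ x) := by
  refine ⟨‖φ‖ * ‖x‖, ?_⟩
  rintro r ⟨y, ⟨_, hy0, hyx⟩, rfl⟩
  calc φ y ≤ ‖φ y‖ := le_abs_self _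
    _ ≤ ‖φ‖ * ‖y‖ := φ.le_opNorm y
    _ ≤ ‖φ‖ * ‖x‖ := by
        exact mul_le_mul_of_nonneg_left (norm_le_of_nonneg_le hy0 hyx) (norm_nonneg φ)

lemma pfun_nonneg {x : E} (hx : 0 ≤ x) : 0 ≤ pfun I φ x := by
  have h0 : (0 : ℝ) ∈ pSet I φ x := by
    refine ⟨0, ⟨I.zero_mem, le_rfl, hx⟩, map_zero φ⟩
  exact le_csSup (pSet_bddAbove hx) h0

lemma pfun_le {x : E} {C : ℝ} (hC : 0 ≤ C) (h : ∀ y, y ∈ I → 0 ≤ y → y ≤ x → φ y ≤ C) :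
    pfun I φ x ≤ C := by
  refine Real.sSup_le ?_ hC
  rintro r ⟨y, ⟨hyI, hy0, hyx⟩, rfl⟩
  exact h y hyI hy0 hyx

lemma le_pfun {x y : E} (hx : 0 ≤ x) (hyI : y ∈ I) (hy0 : 0 ≤ y) (hyx : y ≤ x) :
    φ y ≤ pfun I φ x :=
  le_csSup (pSet_bddAbove hx) ⟨y, ⟨hyI, hy0, hyx⟩, rfl⟩

lemma pfun_le_phi (hφ : ∀ x : E, 0 ≤ x → 0 ≤ φ x) {x : E} (hx : 0 ≤ x) :
    pfun I φ x ≤ φ x :=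
  pfun_le (hφ x hx) fun y _ _ hyx => phi_mono hφ hyx

lemma pfun_mono {a b : E} (ha : 0 ≤ a) (hab : a ≤ b) : pfun I φ a ≤ pfun I φ b := by
  refine Real.sSup_le ?_ (pfun_nonneg (ha.trans hab))
  rintro r ⟨y, ⟨hyI, hy0, hya⟩, rfl⟩
  exact le_pfun (ha.trans hab) hyI hy0 (hya.trans hab)

lemma pfun_zero : pfun I φ (0 : E) = 0 := by
  refine le_antisymm ?_ (pfun_nonneg le_rfl)
  refine pfun_le le_rfl fun y _ hy0 hy1 => ?_
  have : y = 0 := le_antisymm hy1 hy0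
  simp [this]

lemma pfun_add (hIideal : ∀ x y : E, |x| ≤ |y| → y ∈ I → x ∈ I)
    (hφ : ∀ x : E, 0 ≤ x → 0 ≤ φ x) {a b : E} (ha : 0 ≤ a) (hb : 0 ≤ b) :
    pfun I φ (a + b) = pfun I φ a + pfun I φ b := by
  have hab : (0 : E) ≤ a + b := add_nonneg ha hb
  refine le_antisymm ?_ ?_
  · refine pfun_le (add_nonneg (pfun_nonneg ha) (pfun_nonneg hb)) ?_
    intro y hyI hy0 hyx
    set y₁ := y ⊓ a with hy₁def
    have hy₁0 : 0 ≤ y₁ := le_inf hy0 ha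
    have hy₁y : y₁ ≤ y := inf_le_left
    have hy₁a : y₁ ≤ a := inf_le_right
    have hy₁I : y₁ ∈ I := by
      refine hIideal y₁ y ?_ hyI
      rw [abs_of_nonneg hy₁0, abs_of_nonneg hy0]; exact hy₁y
    set y₂ := y - y₁ with hy₂def
    have hy₂0 : 0 ≤ y₂ := sub_nonneg.mpr hy₁y
    have hy₂b : y₂ ≤ b := by
      have h1 : y - y ⊓ a = (y - y) ⊔ (y - a) := sub_inf y a y
      rw [hy₂def, h1, sub_self]
      exact sup_le hb (sub_le_iff_le_add'.mpr hyx)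
    have hy₂I : y₂ ∈ I := I.sub_mem hyI hy₁I
    have hsum : φ y = φ y₁ + φ y₂ := by
      rw [← map_add]; congr 1; rw [hy₂def]; abel
    rw [hsum]
    exact add_le_add (le_pfun ha hy₁I hy₁0 hy₁a) (le_pfun hb hy₂I hy₂0 hy₂b)
  · have key : ∀ y₂, y₂ ∈ I → 0 ≤ y₂ → y₂ ≤ b →
        pfun I φ a + φ y₂ ≤ pfun I φ (a + b) := by
      intro y₂ hy₂I hy₂0 hy₂b
      have hy₂ab : φ y₂ ≤ pfun I φ (a + b) :=
        le_pfun hab hy₂I hy₂0 (hy₂b.trans (le_add_of_nonneg_left ha))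
      have : pfun I φ a ≤ pfun I φ (a + b) - φ y₂ := by
        refine pfun_le (by linarith) ?_
        intro y₁ hy₁I hy₁0 hy₁a
        have : φ y₁ + φ y₂ ≤ pfun I φ (a + b) := by
          have := le_pfun (I := I) (φ := φ) hab (I.add_mem hy₁I hy₂I)
            (add_nonneg hy₁0 hy₂0) (add_le_add hy₁a hy₂b)
          rwa [map_add] at this
        linarith
      linarith
    have : pfun I φ b ≤ pfun I φ (a + b) - pfun I φ a := by
      refine Real.sSup_le ?_ ?_
      · rintro r ⟨y₂, ⟨hy₂I, hy₂0, hy₂b⟩, rfl⟩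
        have := key y₂ hy₂I hy₂0 hy₂b
        linarith
      · have := pfun_mono (I := I) (φ := φ) ha (le_add_of_nonneg_right hb)
        linarith
    linarith

end Helpers
section Sigma

variable {E : Type*} [NormedAddCommGroup E] [Lattice E] [HasSolidNorm E] [IsOrderedAddMonoid E]
  [NormedSpace ℝ E]
variable (I : Submodule ℝ E) (φ : E →L[ℝ] ℝ)

/-- Raw version of the part of `φ` carried on `I`. -/
noncomputable def sigmaRaw (x : E) : ℝ := pfun I φ x⁺ - pfun I φ x⁻

variable {I φ}

lemma posPart_le_abs' (x : E) : x⁺ ≤ |x| := by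
  rw [← posPart_add_negPart x]; exact le_add_of_nonneg_right (negPart_nonneg x)

lemma negPart_le_abs' (x : E) : x⁻ ≤ |x| := by
  rw [← posPart_add_negPart x]; exact le_add_of_nonneg_left (posPart_nonneg x)

lemma sigmaRaw_add (hIideal : ∀ x y : E, |x| ≤ |y| → y ∈ I → x ∈ I)
    (hφ : ∀ x : E, 0 ≤ x → 0 ≤ φ x) (x y : E) :
    sigmaRaw I φ (x + y) = sigmaRaw I φ x + sigmaRaw I φ y := by
  have hz : ∀ z : E, z⁺ = z + z⁻ := fun z => eq_add_of_sub_eq (posPart_sub_negPart z)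
  have key : (x + y)⁺ + x⁻ + y⁻ = (x + y)⁻ + x⁺ + y⁺ := by
    rw [hz (x + y), hz x, hz y]; abel
  have p3 : ∀ a b c : E, 0 ≤ a → 0 ≤ b → 0 ≤ c →
      pfun I φ (a + b + c) = pfun I φ a + pfun I φ b + pfun I φ c := by
    intro a b c ha hb hc
    rw [pfun_add hIideal hφ (add_nonneg ha hb) hc, pfun_add hIideal hφ ha hb]
  have h1 := p3 _ _ _ (posPart_nonneg (x + y)) (negPart_nonneg x) (negPart_nonneg y)
  have h2 := p3 _ _ _ (negPart_nonneg (x + y)) (posPart_nonneg x) (posPart_nonneg y)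
  have hkey : pfun I φ ((x + y)⁺ + x⁻ + y⁻) = pfun I φ ((x + y)⁻ + x⁺ + y⁺) := by
    rw [key]
  rw [h1, h2] at hkey
  simp only [sigmaRaw]
  linarith

lemma sigmaRaw_bound (hφ : ∀ x : E, 0 ≤ x → 0 ≤ φ x)
    {C : ℝ} (hC : 0 ≤ C) (hres : ∀ y : E, y ∈ I → |φ y| ≤ C * ‖y‖) (x : E) :
    |sigmaRaw I φ x| ≤ C * ‖x‖ := by
  have hb : ∀ z : E, 0 ≤ z → z ≤ |x| → pfun I φ z ≤ C * ‖x‖ := by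
    intro z hz0 hzabs
    refine pfun_le (mul_nonneg hC (norm_nonneg x)) ?_
    intro y hyI hy0 hyz
    calc φ y ≤ |φ y| := le_abs_self _
      _ ≤ C * ‖y‖ := hres y hyI
      _ ≤ C * ‖x‖ := by
          refine mul_le_mul_of_nonneg_left ?_ hC
          have h1 : ‖y‖ ≤ ‖z‖ := norm_le_of_nonneg_le hy0 hyz
          have h2 : ‖z‖ ≤ ‖x‖ := by
            calc ‖z‖ ≤ ‖|x|‖ := norm_le_of_nonneg_le hz0 hzabs
              _ = ‖x‖ := norm_abs_eq_norm x
          linarith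
  have hp1 : pfun I φ x⁺ ≤ C * ‖x‖ := hb _ (posPart_nonneg x) (posPart_le_abs' x)
  have hp2 : pfun I φ x⁻ ≤ C * ‖x‖ := hb _ (negPart_nonneg x) (negPart_le_abs' x)
  have hn1 : 0 ≤ pfun I φ x⁺ := pfun_nonneg (posPart_nonneg x)
  have hn2 : 0 ≤ pfun I φ x⁻ := pfun_nonneg (negPart_nonneg x)
  rw [abs_le]
  constructor <;> simp only [sigmaRaw] <;> linarith

variable (I φ)

/-- The part of `φ` carried on the ideal `I`, as a continuous linear functional. -/
noncomputable def sigmaPart (hIideal : ∀ x y : E, |x| ≤ |y| → y ∈ I → x ∈ I)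
    (hφ : ∀ x : E, 0 ≤ x → 0 ≤ φ x) : E →L[ℝ] ℝ :=
  AddMonoidHom.toRealLinearMap
    (AddMonoidHom.mk' (sigmaRaw I φ) (sigmaRaw_add hIideal hφ))
    (AddMonoidHomClass.continuous_of_bound _ ‖φ‖ (fun x => by
      rw [Real.norm_eq_abs]
      exact sigmaRaw_bound hφ (norm_nonneg φ)
        (fun y _ => (φ.le_opNorm y).trans' (le_abs_self _ |>.trans (le_refl _)) |>.trans_eq rfl
          |> fun h => by
            calc |φ y| = ‖φ y‖ := (Real.norm_eq_abs _).symm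
              _ ≤ ‖φ‖ * ‖y‖ := φ.le_opNorm y) x))

variable {I φ}
variable (hIideal : ∀ x y : E, |x| ≤ |y| → y ∈ I → x ∈ I)
    (hφ : ∀ x : E, 0 ≤ x → 0 ≤ φ x)

lemma sigmaPart_apply (x : E) : sigmaPart I φ hIideal hφ x = sigmaRaw I φ x := rfl

lemma sigmaPart_of_nonneg {x : E} (hx : 0 ≤ x) :
    sigmaPart I φ hIideal hφ x = pfun I φ x := by
  rw [sigmaPart_apply, sigmaRaw, posPart_eq_self.mpr hx, negPart_eq_zero.mpr hx, pfun_zero,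
    sub_zero]

lemma sigmaPart_nonneg {x : E} (hx : 0 ≤ x) : 0 ≤ sigmaPart I φ hIideal hφ x := by
  rw [sigmaPart_of_nonneg hIideal hφ hx]; exact pfun_nonneg hx

lemma sigmaPart_le_phi {x : E} (hx : 0 ≤ x) : sigmaPart I φ hIideal hφ x ≤ φ x := by
  rw [sigmaPart_of_nonneg hIideal hφ hx]; exact pfun_le_phi hφ hx

include hφ in
lemma pfun_of_mem {v : E} (hv : v ∈ I) (hv0 : 0 ≤ v) : pfun I φ v = φ v := by
  exact le_antisymm (pfun_le_phi hφ hv0) (le_pfun hv0 hv hv0 le_rfl)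

lemma sigmaPart_of_mem {v : E} (hv : v ∈ I) : sigmaPart I φ hIideal hφ v = φ v := by
  have habsp : |v⁺| ≤ |v| := by
    rw [abs_of_nonneg (posPart_nonneg v)]; exact posPart_le_abs' v
  have habsn : |v⁻| ≤ |v| := by
    rw [abs_of_nonneg (negPart_nonneg v)]; exact negPart_le_abs' v
  have hvp : v⁺ ∈ I := hIideal _ v habsp hv
  have hvn : v⁻ ∈ I := hIideal _ v habsn hv
  rw [sigmaPart_apply, sigmaRaw, pfun_of_mem hφ hvp (posPart_nonneg v),
    pfun_of_mem hφ hvn (negPart_nonneg v), ← map_sub, posPart_sub_negPart]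

lemma sigmaPart_norm_le {C : ℝ} (hC : 0 ≤ C) (hres : ∀ y : E, y ∈ I → |φ y| ≤ C * ‖y‖) :
    ‖sigmaPart I φ hIideal hφ‖ ≤ C := by
  refine ContinuousLinearMap.opNorm_le_bound _ hC fun x => ?_
  rw [sigmaPart_apply, Real.norm_eq_abs]
  exact sigmaRaw_bound hφ hC hres x

end Sigma
section Quot

variable {E : Type*} [NormedAddCommGroup E] [Lattice E] [HasSolidNorm E] [IsOrderedAddMonoid E]
  [NormedSpace ℝ E]
variable (I : Submodule ℝ E) (ρ : E →L[ℝ] ℝ)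

/-- Lift of a functional vanishing on `I` to the quotient. -/
noncomputable def quotLift (h : ∀ v ∈ I, ρ v = 0) : (E ⧸ I) →L[ℝ] ℝ :=
  LinearMap.mkContinuous (I.liftQ (ρ : E →ₗ[ℝ] ℝ) (fun v hv => by simpa using h v hv)) ‖ρ‖
    (by
      intro u
      refine le_of_forall_pos_le_add ?_
      intro δ hδ
      have hε : (0 : ℝ) < δ / (‖ρ‖ + 1) := by positivity
      obtain ⟨m, hm, hlt⟩ := Submodule.Quotient.norm_mk_lt u hε
      have happ : (I.liftQ (ρ : E →ₗ[ℝ] ℝ) (fun v hv => by simpa using h v hv)) u = ρ m := by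
        rw [← hm]; exact Submodule.liftQ_apply _ _ _
      rw [happ]
      have h1 : ‖ρ m‖ ≤ ‖ρ‖ * ‖m‖ := ρ.le_opNorm m
      have h2 : ‖ρ‖ * ‖m‖ ≤ ‖ρ‖ * (‖u‖ + δ / (‖ρ‖ + 1)) :=
        mul_le_mul_of_nonneg_left hlt.le (norm_nonneg ρ)
      have h3 : ‖ρ‖ * (δ / (‖ρ‖ + 1)) ≤ δ := by
        rw [mul_div_assoc']
        rw [div_le_iff₀ (by positivity)]
        nlinarith [norm_nonneg ρ]
      calc ‖ρ m‖ ≤ ‖ρ‖ * ‖m‖ := h1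
        _ ≤ ‖ρ‖ * ‖u‖ + ‖ρ‖ * (δ / (‖ρ‖ + 1)) := by rw [← mul_add]; exact h2
        _ ≤ ‖ρ‖ * ‖u‖ + δ := by linarith)

lemma quotLift_mk (h : ∀ v ∈ I, ρ v = 0) (x : E) :
    quotLift I ρ h (Submodule.Quotient.mk x) = ρ x := by
  simp [quotLift, LinearMap.mkContinuous_apply]

lemma norm_le_quotLift (h : ∀ v ∈ I, ρ v = 0) : ‖ρ‖ ≤ ‖quotLift I ρ h‖ := by
  refine ρ.opNorm_le_bound (norm_nonneg (quotLift I ρ h)) fun x => ?_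
  calc ‖ρ x‖ = ‖quotLift I ρ h (Submodule.Quotient.mk x)‖ := by rw [quotLift_mk]
    _ ≤ ‖quotLift I ρ h‖ * ‖(Submodule.Quotient.mk x : E ⧸ I)‖ :=
        (quotLift I ρ h).le_opNorm _
    _ ≤ ‖quotLift I ρ h‖ * ‖x‖ :=
        mul_le_mul_of_nonneg_left (Submodule.Quotient.norm_mk_le I x) (norm_nonneg (quotLift I ρ h))

end Quot

/-- **Proposition.** If a closed ideal `I` of a Banach lattice `E` and the quotient `E/I`
both have the dual positive Schur property, then so does `E`. -/
theorem dualPositiveSchur_of_ideal_of_quotient (E : Type*) [NormedAddCommGroup E] [Lattice E] [HasSolidNorm E]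
    [IsOrderedAddMonoid E]
    [NormedSpace ℝ E] [CompleteSpace E]
    (I : Submodule ℝ E) (hIclosed : IsClosed (I : Set E))
    (hIideal : ∀ x y : E, |x| ≤ |y| → y ∈ I → x ∈ I)
    (hI : IdealHasDualPositiveSchurProperty I)
    (hQ : QuotientHasDualPositiveSchurProperty I) :
    HasDualPositiveSchurProperty E := by
  intro φ hpos hweak
  -- restrictions to I
  set ψ : ℕ → I →L[ℝ] ℝ := fun n => (φ n).comp I.subtypeL with hψdef
  have hψnorm : Tendsto (fun n => ‖ψ n‖) atTop (𝓝 0) := by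
    refine hI ψ (fun n v hv => hpos n v hv) (fun v => ?_)
    exact hweak (v : E)
  -- the parts of φ n carried on I
  set σ : ℕ → E →L[ℝ] ℝ := fun n => sigmaPart I (φ n) hIideal (hpos n) with hσdef
  have hσnorm : ∀ n, ‖σ n‖ ≤ ‖ψ n‖ := by
    intro n
    refine sigmaPart_norm_le _ _ (norm_nonneg (ψ n)) fun y hy => ?_
    calc |φ n y| = ‖ψ n ⟨y, hy⟩‖ := by simp [hψdef, Real.norm_eq_abs]
      _ ≤ ‖ψ n‖ * ‖(⟨y, hy⟩ : I)‖ := (ψ n).le_opNorm _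
      _ = ‖ψ n‖ * ‖y‖ := rfl
  have hσ0 : Tendsto (fun n => ‖σ n‖) atTop (𝓝 0) :=
    squeeze_zero (fun n => norm_nonneg _) hσnorm hψnorm
  -- the complementary parts vanish on I
  set ρ : ℕ → E →L[ℝ] ℝ := fun n => φ n - σ n with hρdef
  have hρI : ∀ n, ∀ v ∈ I, ρ n v = 0 := by
    intro n v hv
    have := sigmaPart_of_mem (I := I) (φ := φ n) hIideal (hpos n) hv
    simp [hρdef, hσdef, this]
  set g : ℕ → (E ⧸ I) →L[ℝ] ℝ := fun n => quotLift I (ρ n) (hρI n) with hgdef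
  have hgmk : ∀ n (x : E), g n (Submodule.Quotient.mk x) = φ n x - σ n x := by
    intro n x
    rw [hgdef, quotLift_mk]
    simp [hρdef]
  have hg0 : Tendsto (fun n => ‖g n‖) atTop (𝓝 0) := by
    refine hQ g ?_ ?_
    · rintro n u ⟨v, hv0, rfl⟩
      rw [hgmk]
      have := sigmaPart_le_phi (I := I) (φ := φ n) hIideal (hpos n) hv0
      simp only [hσdef]
      linarith
    · intro u
      obtain ⟨x, rfl⟩ := Submodule.Quotient.mk_surjective I u
      simp only [hgmk]
      have hσx : Tendsto (fun n => σ n x) atTop (𝓝 0) := by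
        refine squeeze_zero_norm (fun n => (σ n).le_opNorm x) ?_
        simpa using hσ0.mul_const ‖x‖
      simpa using (hweak x).sub hσx
  have hφle : ∀ n, ‖φ n‖ ≤ ‖g n‖ + ‖σ n‖ := by
    intro n
    have h1 : ‖ρ n‖ ≤ ‖g n‖ := norm_le_quotLift I (ρ n) (hρI n)
    have h2 : φ n = ρ n + σ n := by simp [hρdef]
    calc ‖φ n‖ = ‖ρ n + σ n‖ := by rw [← h2]
      _ ≤ ‖ρ n‖ + ‖σ n‖ := norm_add_le _ _
      _ ≤ ‖g n‖ + ‖σ n‖ := by linarith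
  refine squeeze_zero (fun n => norm_nonneg _) hφle ?_
  simpa using hg0.add hσ0
end

section
/- Let I be a closed ideal of a Fréchet lattice (E,τ). If I has the sequential weak Dunford–Pettis property and the quotient E/I has the (w_{τ̇},τ̇)-positive Schur property, then E has the sequential weak Dunford–Pettis property. -/
open Filter Topology
open scoped Pointwise Uniformity

/-- A subset of a lattice-ordered group is *solid*. -/
def IsSolidSet {E : Type*} [AddCommGroup E] [Lattice E] (s : Set E) : Prop :=
  ∀ ⦃x y : E⦄, |x| ≤ |y| → y ∈ s → x ∈ s

/-- A topology on a Riesz space is *locally convex-solid* if the origin has a neighborhood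
basis consisting of convex solid sets. -/
def IsLocallyConvexSolid {E : Type*} [AddCommGroup E] [Lattice E] [Module ℝ E]
    (τ : TopologicalSpace E) : Prop :=
  (@nhds E τ 0).HasBasis
    (fun s : Set E => s ∈ @nhds E τ 0 ∧ Convex ℝ s ∧ IsSolidSet s) id

/-- A topological Riesz space `E` has the *sequential weak Dunford–Pettis property* if
`φₙ(xₙ) → 0` whenever `(xₙ)` is a weakly null sequence of positive vectors in `E` and
`(φₙ)` is a weakly null sequence in the strong dual `E*_β` of `E` (the space `E →L[ℝ] ℝ`
carries the strong topology of uniform convergence on bounded sets). -/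
def SeqWeakDunfordPettis (E : Type*) [AddCommGroup E] [Lattice E] [Module ℝ E]
    [TopologicalSpace E] : Prop :=
  ∀ (x : ℕ → E) (φ : ℕ → E →L[ℝ] ℝ),
    (∀ n, 0 ≤ x n) →
    (∀ ψ : E →L[ℝ] ℝ, Tendsto (fun n => ψ (x n)) atTop (𝓝 0)) →
    (∀ Ψ : (E →L[ℝ] ℝ) →L[ℝ] ℝ, Tendsto (fun n => Ψ (φ n)) atTop (𝓝 0)) →
    Tendsto (fun n => φ n (x n)) atTop (𝓝 (0 : ℝ))

/-- Lift a null sequence through an open surjective map, in a first countable space. -/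
private lemma lift_null_seq {X Y : Type*} [TopologicalSpace X] [TopologicalSpace Y]
    [FirstCountableTopology X]
    {f : X → Y} (hf : IsOpenMap f) (hsurj : Function.Surjective f)
    {y : ℕ → Y} {x0 : X} (hy : Tendsto y atTop (𝓝 (f x0))) :
    ∃ w : ℕ → X, Tendsto w atTop (𝓝 x0) ∧ ∀ n, f (w n) = y n := by
  classical
  obtain ⟨b, hb⟩ := (𝓝 x0).exists_antitone_basis
  choose N hN using fun k : ℕ =>
    eventually_atTop.mp (hy.eventually (hf.image_mem_nhds (hb.mem k)))
  set M : ℕ → ℕ := fun k => (Finset.range (k + 1)).sup N with hM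
  have hMN : ∀ k, N k ≤ M k := fun k => Finset.le_sup (Finset.self_mem_range_succ k)
  set K : ℕ → ℕ := fun n => Nat.findGreatest (fun k => M k ≤ n) n with hKdef
  have hKmem : ∀ n, M 0 ≤ n → y n ∈ f '' b (K n) := by
    intro n hn
    exact hN _ _ (le_trans (hMN _) (Nat.findGreatest_spec (P := fun k => M k ≤ n) (Nat.zero_le n) hn))
  have hKtop : Tendsto K atTop atTop := by
    refine tendsto_atTop.2 fun k => ?_
    filter_upwards [eventually_ge_atTop (max (M k) k)] with n hn
    exact Nat.le_findGreatest (le_trans (le_max_right _ _) hn)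
      (le_trans (le_max_left _ _) hn)
  refine ⟨fun n => if h : y n ∈ f '' b (K n) then h.choose else (hsurj (y n)).choose, ?_, ?_⟩
  · rw [hb.toHasBasis.tendsto_right_iff]
    intro k _
    filter_upwards [hKtop.eventually_ge_atTop k, eventually_ge_atTop (M 0)] with n hk h0
    rw [dif_pos (hKmem n h0)]
    exact hb.antitone hk (hKmem n h0).choose_spec.1
  · intro n
    by_cases h : y n ∈ f '' b (K n)
    · dsimp only
      rw [dif_pos h]; exact h.choose_spec.2
    · dsimp only
      rw [dif_neg h]; exact (hsurj (y n)).choose_spec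

/-- Hahn–Banach: continuous extension of a continuous functional on a subspace of a
locally convex-solid space. -/
private lemma exists_clm_extension {E : Type*} [AddCommGroup E] [Lattice E] [Module ℝ E]
    [τ : TopologicalSpace E] [IsTopologicalAddGroup E] [ContinuousSMul ℝ E]
    (hlcs : IsLocallyConvexSolid τ) (I : Submodule ℝ E) (ψ : I →L[ℝ] ℝ) :
    ∃ g : E →L[ℝ] ℝ, ∀ v : I, g v = ψ v := by
  -- continuity of `ψ` at `0` gives a neighborhood `W` of `0` on which `|ψ| ≤ 1`
  have h1 : ∀ᶠ v : I in 𝓝 0, |ψ v| ≤ 1 := by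
    have h0 : Tendsto ψ (𝓝 0) (𝓝 0) := by
      simpa using ψ.continuous.tendsto 0
    filter_upwards [h0 (Metric.closedBall_mem_nhds (0 : ℝ) one_pos)] with v hv
    simpa [Real.norm_eq_abs] using mem_closedBall_zero_iff.mp hv
  rw [show (𝓝 (0 : I)) = Filter.comap (Subtype.val : I → E) (𝓝 0) by
        simpa using nhds_induced (Subtype.val : I → E) 0,
      Filter.eventually_comap] at h1
  obtain ⟨W, hW, hWb⟩ := h1.exists_mem
  obtain ⟨U, ⟨hU0, hUc, hUs⟩, hUW⟩ := hlcs.mem_iff.mp hW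
  have habs : Absorbent ℝ U := absorbent_nhds_zero hU0
  have hsym : ∀ u ∈ U, -u ∈ U := fun u hu => hUs (abs_neg u).le hu
  -- `ψ` is dominated by the gauge of `U` on `I`
  have hbound : ∀ v : I, ψ v ≤ gauge U (v : E) := by
    intro v
    refine le_csInf habs.gauge_set_nonempty ?_
    rintro r ⟨hr0, hvr⟩
    obtain ⟨u, huU, huv⟩ := hvr
    have huI : u ∈ I := by
      have h := I.smul_mem r⁻¹ v.2
      rwa [← huv, inv_smul_smul₀ hr0.ne'] at h
    have hvu : v = r • (⟨u, huI⟩ : I) := Subtype.ext (by simpa using huv.symm)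
    have h1u : |ψ ⟨u, huI⟩| ≤ 1 := hWb u (hUW huU) ⟨u, huI⟩ rfl
    calc ψ v = r * ψ ⟨u, huI⟩ := by rw [hvu, map_smul, smul_eq_mul]
      _ ≤ r * 1 := mul_le_mul_of_nonneg_left (le_trans (le_abs_self _) h1u) hr0.le
      _ = r := mul_one r
  obtain ⟨g, hg1, hg2⟩ := exists_extension_of_le_sublinear ⟨I, (ψ : I →ₗ[ℝ] ℝ)⟩ (gauge U)
    (fun c hc x => by rw [gauge_smul_of_nonneg hc.le, smul_eq_mul])
    (gauge_add_le hUc habs) hbound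
  have habs_g : ∀ a : E, |g a| ≤ gauge U a := by
    intro a
    refine abs_le.2 ⟨?_, hg2 a⟩
    have h := hg2 (-a)
    rw [map_neg, gauge_neg hsym] at h
    linarith
  have hcont0 : ContinuousAt g 0 := by
    rw [ContinuousAt, map_zero, Metric.tendsto_nhds]
    intro ε hε
    have hU' : (ε / 2) • U ∈ 𝓝 (0 : E) := by
      have := (smul_mem_nhds_smul_iff₀ (c := ε / 2) (by positivity)
        (s := U) (x := (0 : E))).mpr
      simpa using this hU0
    filter_upwards [hU'] with a ha
    have h1 : gauge U a ≤ ε / 2 := gauge_le_of_mem (by positivity) ha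
    have h2 := habs_g a
    rw [Real.dist_eq, sub_zero]
    calc |g a| ≤ ε / 2 := le_trans h2 h1
      _ < ε := by linarith
  exact ⟨⟨g, continuous_of_continuousAt_zero g hcont0⟩, fun v => hg1 v⟩

/-- **Theorem.** Let `I` be a closed ideal of a Fréchet lattice `(E, τ)`. If `I` has the
sequential weak Dunford–Pettis property and `E/I` has the `(w_{τ̇}, τ̇)`-positive Schur
property, then `E` has the sequential weak Dunford–Pettis property. -/
theorem seqWeakDunfordPettis_of_ideal_of_quotient {E : Type*} [AddCommGroup E] [Lattice E]
    [CovariantClass E E (· + ·) (· ≤ ·)] [Module ℝ E]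
    -- `E` is a Riesz space (ordered vector space which is a lattice):
    (hpos_smul : ∀ (c : ℝ) (x : E), 0 ≤ c → 0 ≤ x → 0 ≤ c • x)
    -- `(E, τ)` is a Fréchet lattice: `τ` is a locally convex-solid, metrizable and
    -- complete linear topology:
    [τ : TopologicalSpace E] [IsTopologicalAddGroup E] [ContinuousSMul ℝ E]
    [TopologicalSpace.MetrizableSpace E]
    (hlcs : IsLocallyConvexSolid τ)
    (hcompl : @CompleteSpace E (IsTopologicalAddGroup.rightUniformSpace E))
    -- `I` is a closed ideal of `E`:
    (I : Submodule ℝ E) (hIclosed : IsClosed (I : Set E))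
    (hIideal : IsSolidSet (I : Set E))
    -- `I` (as a topological Riesz space with the induced structures) has the sequential
    -- weak Dunford–Pettis property, stated via the restrictions to `I` of functionals:
    (hI : ∀ (x : ℕ → I) (φ : ℕ → I →L[ℝ] ℝ),
      (∀ n, (0 : E) ≤ (x n : E)) →
      (∀ ψ : I →L[ℝ] ℝ, Tendsto (fun n => ψ (x n)) atTop (𝓝 0)) →
      (∀ Ψ : (I →L[ℝ] ℝ) →L[ℝ] ℝ, Tendsto (fun n => Ψ (φ n)) atTop (𝓝 0)) →
      Tendsto (fun n => φ n (x n)) atTop (𝓝 (0 : ℝ)))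
    -- `E/I` has the `(w_{τ̇}, τ̇)`-positive Schur property:
    (hQ : ∀ u : ℕ → E ⧸ I, (∀ n, ∃ v : E, 0 ≤ v ∧ Submodule.Quotient.mk v = u n) →
      (∀ φ : (E ⧸ I) →L[ℝ] ℝ, Tendsto (fun n => φ (u n)) atTop (𝓝 0)) →
      Tendsto u atTop (𝓝 (0 : E ⧸ I))) :
    SeqWeakDunfordPettis E := by
  intro x φ hpos hweak hweak'
  classical
  -- Step 1: the images in the quotient form a weakly null positive sequence, hence are null.
  have hcontq : Continuous I.mkQ := (Submodule.isOpenQuotientMap_mkQ I).continuous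
  let qL : E →L[ℝ] E ⧸ I := ⟨I.mkQ, hcontq⟩
  have hq0 : Tendsto (fun n => I.mkQ (x n)) atTop (𝓝 0) := by
    refine hQ _ (fun n => ⟨x n, hpos n, rfl⟩) ?_
    intro φQ
    exact hweak (φQ.comp qL)
  -- Step 2: lift to a null sequence `w` in `E` with `mkQ (w n) = mkQ (x n)`.
  obtain ⟨w, hw0, hwq⟩ := lift_null_seq (I.isOpenMap_mkQ) (I.mkQ_surjective)
    (x0 := 0) (by simpa using hq0)
  -- Step 3: decompose `x n = y n + z n`, with `y n ∈ I` positive and `z n → 0` positive.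
  set z : ℕ → E := fun n => (w n ⊔ 0) ⊓ x n with hzdef
  set y : ℕ → E := fun n => x n - z n with hydef
  have hz0le : ∀ n, 0 ≤ z n := fun n => le_inf le_sup_right (hpos n)
  have hzlew : ∀ n, z n ≤ |w n| :=
    fun n => le_trans inf_le_left (sup_le (le_abs_self _) (abs_nonneg _))
  have hy_eq : ∀ n, y n = (x n - (w n ⊔ 0)) ⊔ 0 := fun n => by
    rw [hydef]; dsimp only; rw [hzdef]; dsimp only; rw [sub_inf, sub_self]
  have hy0le : ∀ n, 0 ≤ y n := fun n => (hy_eq n) ▸ le_sup_right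
  have hyle : ∀ n, y n ≤ |x n - w n| := fun n => by
    rw [hy_eq n]
    exact sup_le (le_trans (sub_le_sub_left le_sup_left _) (le_abs_self _)) (abs_nonneg _)
  have hyI : ∀ n, y n ∈ I := by
    intro n
    have hxw : x n - w n ∈ I := by
      have h := (Submodule.Quotient.eq I).mp (hwq n)
      simpa using I.neg_mem h
    exact hIideal (le_trans (abs_of_nonneg (hy0le n)).le (hyle n)) hxw
  have hz0 : Tendsto z atTop (𝓝 0) := by
    rw [hlcs.tendsto_right_iff]
    intro s hs
    filter_upwards [hw0 hs.1] with n hn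
    exact hs.2.2 (le_trans (abs_of_nonneg (hz0le n)).le (hzlew n)) hn
  -- Step 4: `φ n (z n) → 0` by equicontinuity (Banach–Steinhaus, `E` is Fréchet hence Baire).
  have hzφ : Tendsto (fun n => φ n (z n)) atTop (𝓝 (0 : ℝ)) := by
    letI : UniformSpace E := IsTopologicalAddGroup.rightUniformSpace E
    haveI : IsUniformAddGroup E := isUniformAddGroup_of_addCommGroup
    haveI : (𝓤 E).IsCountablyGenerated := by
      rw [uniformity_eq_comap_nhds_zero' E]
      exact Filter.comap.isCountablyGenerated _ _
    haveI : CompleteSpace E := hcompl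
    haveI : BaireSpace E := inferInstance
    haveI : BarrelledSpace ℝ E := inferInstance
    have hequi : UniformEquicontinuous (fun n => (φ n : E → ℝ)) := by
      refine (norm_withSeminorms ℝ ℝ).banach_steinhaus ?_
      intro k x0
      have hp : Tendsto (fun n => φ n x0) atTop (𝓝 (0 : ℝ)) := by
        let Ψ : (E →L[ℝ] ℝ) →L[ℝ] ℝ :=
          { toFun := fun f => f x0
            map_add' := fun f g => rfl
            map_smul' := fun c f => rfl
            cont := continuous_eval_const x0 }
        exact hweak' Ψ
      exact hp.norm.bddAbove_range
    have hEA : EquicontinuousAt (fun n => (φ n : E → ℝ)) 0 := hequi.equicontinuous 0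
    rw [NormedAddCommGroup.tendsto_nhds_zero]
    intro ε hε
    filter_upwards [hz0.eventually (hEA _ (Metric.dist_mem_uniformity hε))] with n hn
    simpa [dist_eq_norm] using hn n
  -- Step 5: `φ n (y n) → 0` by the sequential weak DP property of `I`.
  have hyφ : Tendsto (fun n => φ n (y n)) atTop (𝓝 (0 : ℝ)) := by
    let inc : I →L[ℝ] E := ⟨I.subtype, continuous_subtype_val⟩
    have key := hI (fun n => ⟨y n, hyI n⟩)
      (fun n => (ContinuousLinearMap.precomp ℝ inc) (φ n)) hy0le ?_ ?_
    · exact key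
    · intro ψ
      obtain ⟨g, hg⟩ := exists_clm_extension hlcs I ψ
      have heq : (fun n => ψ (⟨y n, hyI n⟩ : I)) = fun n => g (x n) - g (z n) := by
        funext n
        rw [← hg ⟨y n, hyI n⟩]
        show g (y n) = g (x n) - g (z n)
        rw [hydef]; dsimp only; rw [map_sub]
      rw [heq]
      have hgz : Tendsto (fun n => g (z n)) atTop (𝓝 (0 : ℝ)) := by
        have := (g.continuous.tendsto 0).comp hz0
        simpa [Function.comp_def] using this
      simpa using (hweak g).sub hgz
    · intro Ψ
      exact hweak' (Ψ.comp (ContinuousLinearMap.precomp ℝ inc))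
  -- Conclusion
  have hsplit : (fun n => φ n (x n)) = fun n => φ n (y n) + φ n (z n) := by
    funext n
    rw [← map_add]
    congr 1
    rw [hydef]; dsimp only; rw [sub_add_cancel]
  rw [hsplit]
  simpa using hyφ.add hzφ
end
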